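/- Let E > 0, ℓ > 0, G_c > 0. Define σ(ε) = (G_c / (G_c + E ε² ℓ))² E ε for ε ≥ 0. Then σ attains its maximum on [0, ∞) at ε_c = sqrt(G_c / (3 ℓ E)), and the maximum value is σ_c = sqrt(27 E G_c / (256 ℓ)). -/
import Mathlib


theorem critical_stress (E ℓ Gc : ℝ) (hE : 0 < E) (hℓ : 0 < ℓ) (hG : 0 < Gc) :
    let σ : ℝ → ℝ := fun ε => (Gc / (Gc + E * ε ^ 2 * ℓ)) ^ 2 * E * ε
    let εc : ℝ := Real.sqrt (Gc / (3 * ℓ * E))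
    (∀ ε ≥ (0 : ℝ), σ ε ≤ σ εc) ∧ σ εc = Real.sqrt (27 * E * Gc / (256 * ℓ)) := by
  intro σ εc
  have harg : 0 ≤ Gc / (3 * ℓ * E) := by positivity
  have hεc2 : εc ^ 2 = Gc / (3 * ℓ * E) := Real.sq_sqrt harg
  have hεc0 : 0 ≤ εc := Real.sqrt_nonneg _
  have hσc : σ εc = 9 / 16 * E * εc := by
    simp only [σ]
    rw [hεc2]
    have h1 : Gc + E * (Gc / (3 * ℓ * E)) * ℓ = 4 / 3 * Gc := by
      field_simp; ring
    rw [h1]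
    field_simp
    ring
  have hval : σ εc = Real.sqrt (27 * E * Gc / (256 * ℓ)) := by
    rw [hσc]
    have h2 : 27 * E * Gc / (256 * ℓ) = (9 / 16 * E * εc) ^ 2 := by
      rw [mul_pow, mul_pow, hεc2]
      field_simp
      ring
    rw [h2, Real.sqrt_sq (by positivity)]
  refine ⟨?_, hval⟩
  intro ε hε
  rw [hσc]
  have hD : 0 < Gc + E * ε ^ 2 * ℓ := by positivity
  have h1 : σ ε = Gc ^ 2 * E * ε / (Gc + E * ε ^ 2 * ℓ) ^ 2 := by
    simp only [σ]
    field_simp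
  rw [h1, div_le_iff₀ (by positivity : (0:ℝ) < (Gc + E * ε ^ 2 * ℓ) ^ 2)]
  have hL : 0 ≤ Gc ^ 2 * E * ε := by positivity
  have hR : 0 ≤ 9 / 16 * E * εc * (Gc + E * ε ^ 2 * ℓ) ^ 2 := by positivity
  have hquad : (0:ℝ) ≤ 3 * (E * ε ^ 2 * ℓ) ^ 2 + 14 * Gc * (E * ε ^ 2 * ℓ) + 27 * Gc ^ 2 := by
    positivity
  have key : 256 * Gc ^ 3 * (E * ε ^ 2 * ℓ) ≤ 27 * (Gc + E * ε ^ 2 * ℓ) ^ 4 := by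
    nlinarith [mul_nonneg (sq_nonneg (3 * (E * ε ^ 2 * ℓ) - Gc)) hquad]
  have hsq : (Gc ^ 2 * E * ε) ^ 2 ≤ (9 / 16 * E * εc * (Gc + E * ε ^ 2 * ℓ) ^ 2) ^ 2 := by
    have h3 : (9 / 16 * E * εc * (Gc + E * ε ^ 2 * ℓ) ^ 2) ^ 2
        = 27 * E * Gc * (Gc + E * ε ^ 2 * ℓ) ^ 4 / (256 * ℓ) := by
      have h4 : (9 / 16 * E * εc * (Gc + E * ε ^ 2 * ℓ) ^ 2) ^ 2
          = (9 / 16) ^ 2 * E ^ 2 * εc ^ 2 * ((Gc + E * ε ^ 2 * ℓ) ^ 2) ^ 2 := by ring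
      rw [h4, hεc2]
      field_simp
      ring
    rw [h3, le_div_iff₀ (by positivity : (0:ℝ) < 256 * ℓ)]
    have key2 := mul_le_mul_of_nonneg_left key (show (0:ℝ) ≤ E * Gc by positivity)
    nlinarith [key2]
  exact (pow_le_pow_iff_left₀ hL hR two_ne_zero).mp hsq
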